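/- Let D be a finite abelian group and q : D → ℚ/ℤ a map satisfying q(n·γ) = n²·q(γ) for all n ∈ ℤ and γ ∈ D, such that b(β,γ) := q(β+γ) − q(β) − q(γ) is ℤ-bilinear. Let c be an even integer and write D_c = {α ∈ D : c·α = 0}. Then every γ ∈ D satisfying c·q(α) + b(α,γ) = 0 in ℚ/ℤ for all α ∈ D_c also satisfies b(α,γ) = 0 in ℚ/ℤ for all α ∈ D_{c/2}. -/
import Mathlib


/-- Let `D` be a finite abelian group, `q : D → ℚ/ℤ` with
`q(n·γ) = n²·q(γ)` and such that `b(β,γ) = q(β+γ) − q(β) − q(γ)` is ℤ-bilinear. Let `c`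
be an even integer and `D_c = {α : c·α = 0}`. Then every `γ` with
`c·q(α) + b(α,γ) = 0` for all `α ∈ D_c` satisfies `b(α,γ) = 0` for all `α ∈ D_{c/2}`. -/
theorem mem_Dcstar_orthogonal (D : Type*) [AddCommGroup D] [Fintype D]
    (q : D → AddCircle (1 : ℚ))
    (hq : ∀ (n : ℤ) (γ : D), q (n • γ) = (n ^ 2) • q γ)
    (b : D → D → AddCircle (1 : ℚ))
    (hb : ∀ β γ, b β γ = q (β + γ) - q β - q γ)
    (hbil₁ : ∀ β₁ β₂ γ, b (β₁ + β₂) γ = b β₁ γ + b β₂ γ)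
    (hbil₂ : ∀ β γ₁ γ₂, b β (γ₁ + γ₂) = b β γ₁ + b β γ₂)
    (c : ℤ) (hc : Even c) (γ : D)
    (hγ : ∀ α : D, c • α = 0 → c • q α + b α γ = 0) :
    ∀ α : D, (c / 2) • α = 0 → b α γ = 0 := by
  intro α hα
  set d : ℤ := c / 2 with hd
  obtain ⟨e, he⟩ := hc
  have hcd : c = 2 * d := by omega
  -- b(·, α) as an additive hom
  have hself : b α α = (2 : ℤ) • q α := by
    rw [hb, show α + α = (2 : ℤ) • α from (two_zsmul α).symm, hq]
    norm_num
    abel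
  let f : D →+ AddCircle (1 : ℚ) := AddMonoidHom.mk' (fun β => b β α)
    (fun x y => hbil₁ x y α)
  have hkey : c • q α = 0 := by
    have h1 : f (d • α) = d • f α := map_zsmul f d α
    rw [hα, map_zero] at h1
    have h2 : d • b α α = 0 := h1.symm
    rw [hself, smul_comm] at h2
    rw [hcd, mul_smul]
    exact h2
  have hcα : c • α = 0 := by
    rw [hcd, mul_smul, hα, smul_zero]
  have := hγ α hcα
  rw [hkey, zero_add] at this
  exact this
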